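/- Equip E := ℂ^ℕ with the product σ-algebra of countably many copies of the Borel σ-algebra of ℂ and with the product measure μ = ⊗ₙ μₙ of a sequence of Borel probability measures μₙ on ℂ. Define x ∼ y iff there exists N with xₙ = yₙ for all n ≥ N. Let σ : E → ℂ be a closed-valued open-measurable multifunction and σ_∼(x) := ⋂_{y ∼ x} σ(y). Then there exists a closed set A ⊆ ℂ such that the set {x ∈ E | σ_∼(x) = A} has μ-outer measure 1 (equivalently, it lies in the μ-completion of the product σ-algebra and has μ-measure 1). -/

import Mathlib

/-!
Fix a closed ball `B` (centre in a countable dense set, radius `1 / (n + 1)`). Whether `σ_∼(x)`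
meets `B` does not change when finitely many coordinates of `x` change. By compactness of `B`,
`σ_∼(x)` misses `B` iff finitely many modifications `y₁, …, yₘ` of `x` have
`B ∩ σ(y₁) ∩ ⋯ ∩ σ(yₘ) = ∅`. That is a projection of a Borel set, so the event is co-analytic and
hence universally measurable (by the usual compact inner approximation of a continuous image of
Baire space).

A zero-one law then applies to such events: gluing the first `N` coordinates of one sample to the
tail of an independent one preserves the product measure, so an event `S` of this kind is
independent of every box, and `μ(S)⁻¹ • μ|_S` is again the product measure. Consequently, almost
surely `σ_∼(x)` meets exactly a deterministic set of these balls, and a closed set is determined by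
the balls it meets.
-/

open MeasureTheory Set Filter Topology Metric
open scoped ENNReal

section ZeroOneLaw

variable {α : Type*} [MeasurableSpace α]

lemma measurable_piecewise_Iio (N : ℕ) :
    Measurable fun p : (ℕ → α) × (ℕ → α) ↦ (Iio N).piecewise p.1 p.2 := by
  refine measurable_pi_iff.mpr fun n ↦ ?_
  by_cases h : n < N
  · simp only [Set.piecewise, mem_Iio, h, if_true]
    fun_prop
  · simp only [Set.piecewise, mem_Iio, h, if_false]
    fun_prop

variable (μs : ℕ → Measure α) [∀ n, IsProbabilityMeasure (μs n)]

lemma map_piecewise_Iio_prod_infinitePi (N : ℕ) :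
    ((Measure.infinitePi μs).prod (Measure.infinitePi μs)).map
      (fun p ↦ (Iio N).piecewise p.1 p.2) = Measure.infinitePi μs := by
  classical
  refine Measure.eq_infinitePi μs fun s t ht ↦ ?_
  have hpre : (fun p : (ℕ → α) × (ℕ → α) ↦ (Iio N).piecewise p.1 p.2) ⁻¹' (s : Set ℕ).pi t =
      (↑(s.filter (· < N)) : Set ℕ).pi t ×ˢ (↑(s.filter (¬ · < N)) : Set ℕ).pi t := by
    ext ⟨w, x⟩
    simp only [mem_preimage, Set.mem_pi, mem_prod, Finset.coe_filter,
      Finset.mem_coe, Set.piecewise, mem_Iio]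
    constructor
    · intro h
      exact ⟨fun n hn ↦ by simpa [hn.2] using h n hn.1, fun n hn ↦ by simpa [hn.2] using h n hn.1⟩
    · rintro ⟨hw, hx⟩ n hn
      by_cases hnN : n < N
      · simpa [hnN] using hw n ⟨hn, hnN⟩
      · simpa [hnN] using hx n ⟨hn, hnN⟩
  rw [Measure.map_apply (measurable_piecewise_Iio N) (.pi s.countable_toSet fun i _ ↦ ht i), hpre,
    Measure.prod_prod, Measure.infinitePi_pi _ fun i _ ↦ ht i,
    Measure.infinitePi_pi _ fun i _ ↦ ht i, Finset.prod_filter_mul_prod_filter_not]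

variable {μs}

lemma infinitePi_pi_inter_of_invariant {S : Set (ℕ → α)}
    (hS : NullMeasurableSet S (Measure.infinitePi μs))
    (hinv : ∀ x y : ℕ → α, x =ᶠ[atTop] y → x ∈ S → y ∈ S)
    (s : Finset ℕ) (t : ℕ → Set α) (ht : ∀ i, MeasurableSet (t i)) :
    Measure.infinitePi μs ((s : Set ℕ).pi t ∩ S) =
      Measure.infinitePi μs ((s : Set ℕ).pi t) * Measure.infinitePi μs S := by
  classical
  set N := s.sup id + 1
  have hpre : (fun p : (ℕ → α) × (ℕ → α) ↦ (Iio N).piecewise p.1 p.2) ⁻¹' ((s : Set ℕ).pi t ∩ S)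
      = (s : Set ℕ).pi t ×ˢ S := by
    ext ⟨w, x⟩
    have hsN : ∀ n ∈ s, n < N := fun n hn ↦ Nat.lt_succ_of_le (Finset.le_sup (f := id) hn)
    have htail : (Iio N).piecewise w x =ᶠ[atTop] x :=
      (eventually_ge_atTop N).mono fun n hn ↦ piecewise_eq_of_notMem _ _ _ (not_lt.mpr hn)
    simp only [mem_preimage, mem_inter_iff, mem_prod, Set.mem_pi]
    refine and_congr (forall₂_congr fun n hn ↦ ?_) ⟨hinv _ _ htail, hinv _ _ htail.symm⟩
    rw [piecewise_eq_of_mem _ _ _ (mem_Iio.mpr (hsN n hn))]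
  have hmap := map_piecewise_Iio_prod_infinitePi μs N
  have hmeas : NullMeasurableSet ((s : Set ℕ).pi t ∩ S) (Measure.infinitePi μs) :=
    (MeasurableSet.pi s.countable_toSet fun i _ ↦ ht i).nullMeasurableSet.inter hS
  calc Measure.infinitePi μs ((s : Set ℕ).pi t ∩ S)
      = ((Measure.infinitePi μs).prod (Measure.infinitePi μs)).map
          (fun p ↦ (Iio N).piecewise p.1 p.2) ((s : Set ℕ).pi t ∩ S) := by rw [hmap]
    _ = _ := by
      rw [Measure.map_apply₀ (measurable_piecewise_Iio N).aemeasurable (hmap.symm ▸ hmeas), hpre,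
        Measure.prod_prod]

theorem ae_mem_or_ae_notMem_of_invariant {S : Set (ℕ → α)}
    (hS : NullMeasurableSet S (Measure.infinitePi μs))
    (hinv : ∀ x y : ℕ → α, x =ᶠ[atTop] y → x ∈ S → y ∈ S) :
    (∀ᵐ x ∂Measure.infinitePi μs, x ∈ S) ∨ ∀ᵐ x ∂Measure.infinitePi μs, x ∉ S := by
  refine or_iff_not_imp_right.mpr fun hS0 ↦ ?_
  rw [← measure_eq_zero_iff_ae_notMem] at hS0
  have hcond : (Measure.infinitePi μs S)⁻¹ • (Measure.infinitePi μs).restrict S =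
      Measure.infinitePi μs := by
    refine Measure.eq_infinitePi μs fun s t ht ↦ ?_
    rw [Measure.smul_apply, Measure.restrict_apply₀' hS,
      infinitePi_pi_inter_of_invariant hS hinv s t ht, smul_eq_mul, mul_left_comm,
      ENNReal.inv_mul_cancel hS0 (measure_ne_top _ S), mul_one,
      Measure.infinitePi_pi _ fun i _ ↦ ht i]
  change Measure.infinitePi μs Sᶜ = 0
  rw [← hcond, Measure.smul_apply, Measure.restrict_apply₀' hS,
    compl_inter_self, measure_empty, smul_zero]

end ZeroOneLaw

section AnalyticSet

variable {X : Type*}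

lemma MeasureTheory.NullMeasurableSet.of_forall_lt_exists_measurableSet_subset
    [MeasurableSpace X] {μ : Measure X} [IsFiniteMeasure μ] {s : Set X}
    (h : ∀ c < μ s, ∃ t ⊆ s, MeasurableSet t ∧ c ≤ μ t) : NullMeasurableSet s μ := by
  rcases eq_zero_or_pos (μ s) with hs0 | hs0
  · exact .of_null hs0
  obtain ⟨u, -, hu, hu_lim⟩ := exists_seq_strictMono_tendsto' hs0
  choose t hts htm hut using fun n ↦ h (u n) (hu n).2
  have hle : μ s ≤ μ (⋃ n, t n) :=
    le_of_tendsto' hu_lim fun n ↦ (hut n).trans (measure_mono (subset_iUnion t n))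
  exact (MeasurableSet.iUnion htm).nullMeasurableSet.congr
    (ae_eq_of_subset_of_measure_ge (iUnion_subset hts) hle
      (MeasurableSet.iUnion htm).nullMeasurableSet (measure_ne_top μ s))

lemma pi_Iio_Iic_eq_iUnion_update (v : ℕ → ℕ) (n : ℕ) :
    ((Iio n).pi fun i ↦ Iic (v i)) =
      ⋃ k, (Iio (n + 1)).pi fun i ↦ Iic (Function.update v n k i) := by
  ext p
  simp only [Set.mem_pi, mem_Iio, mem_Iic, mem_iUnion, Nat.lt_succ_iff_lt_or_eq]
  constructor
  · intro hp
    refine ⟨p n, fun i hi ↦ ?_⟩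
    rcases hi with hi | rfl
    · simpa [Function.update_of_ne hi.ne] using hp i hi
    · simp
  · rintro ⟨k, hk⟩ i hi
    simpa [Function.update_of_ne hi.ne] using hk i (.inl hi)

lemma exists_update_lt_measure_image_pi_Iio [MeasurableSpace X] (μ : Measure X)
    (f : (ℕ → ℕ) → X) {c : ℝ≥0∞} {v : ℕ → ℕ} {n : ℕ}
    (hv : c < μ (f '' (Iio n).pi fun i ↦ Iic (v i))) :
    ∃ k, c < μ (f '' (Iio (n + 1)).pi fun i ↦ Iic (Function.update v n k i)) := by
  have hmono : Monotone fun k ↦ f '' (Iio (n + 1)).pi fun i ↦ Iic (Function.update v n k i) := by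
    intro k k' hkk'
    refine image_mono (pi_mono fun i _ ↦ Iic_subset_Iic.mpr ?_)
    rcases eq_or_ne i n with rfl | hi
    · simpa using hkk'
    · simp [Function.update_of_ne hi]
  rwa [pi_Iio_Iic_eq_iUnion_update, image_iUnion, hmono.directed_le.measure_iUnion,
    lt_iSup_iff] at hv

/-- The greedy choice of the bounds `v n`, one coordinate at a time. -/
lemma exists_forall_lt_measure_image_pi_Iio [MeasurableSpace X] (μ : Measure X)
    (f : (ℕ → ℕ) → X) {c : ℝ≥0∞} (hc : c < μ (range f)) :
    ∃ v : ℕ → ℕ, ∀ n, c < μ (f '' (Iio n).pi fun i ↦ Iic (v i)) := by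
  choose g hg using fun n (v : ℕ → ℕ) (hv : c < μ (f '' (Iio n).pi fun i ↦ Iic (v i))) ↦
    exists_update_lt_measure_image_pi_Iio μ f hv
  let w : (n : ℕ) → {v : ℕ → ℕ // c < μ (f '' (Iio n).pi fun i ↦ Iic (v i))} :=
    fun n ↦ Nat.rec ⟨0, by simpa [image_univ] using hc⟩
      (fun n w ↦ ⟨Function.update w.1 n (g n w.1 w.2), hg n w.1 w.2⟩) n
  have hw : ∀ n, ∀ i < n, (w n).1 i = (w (i + 1)).1 i := by
    intro n
    induction n with
    | zero => intro i hi; omega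
    | succ n ih =>
      intro i hi
      rcases Nat.lt_succ_iff_lt_or_eq.mp hi with hi | rfl
      · exact (Function.update_of_ne hi.ne _ _).trans (ih i hi)
      · rfl
  refine ⟨fun i ↦ (w (i + 1)).1 i, fun n ↦ ?_⟩
  rw [pi_congr (rfl : Iio n = Iio n) fun i hi ↦ congrArg Iic (hw n i hi).symm]
  exact (w n).2

lemma exists_tendsto_subseq_of_forall_mem_pi_Iio {v : ℕ → ℕ} {p : ℕ → ℕ → ℕ}
    (hp : ∀ n, p n ∈ (Iio n).pi fun i ↦ Iic (v i)) :
    ∃ q ∈ univ.pi (fun i ↦ Iic (v i)), ∃ φ : ℕ → ℕ, StrictMono φ ∧ Tendsto (p ∘ φ) atTop (𝓝 q) := by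
  -- beyond the `n`-th coordinate, `p n` is bounded by the finitely many earlier terms
  set B : ℕ → ℕ := fun i ↦ max (v i) ((Finset.range (i + 1)).sup fun m ↦ p m i)
  have hpB : ∀ n, p n ∈ univ.pi fun i ↦ Iic (B i) := by
    intro n i _
    rcases lt_or_ge i n with hin | hin
    · exact le_max_of_le_left (show p n i ≤ v i from hp n i hin)
    · exact le_max_of_le_right
        (Finset.le_sup (f := fun m ↦ p m i) (Finset.mem_range.mpr (Nat.lt_succ_of_le hin)))
  obtain ⟨q, -, φ, hφ, hlim⟩ :=
    (isCompact_univ_pi fun i ↦ (finite_Iic (B i)).isCompact).tendsto_subseq hpB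
  refine ⟨q, fun i _ ↦ ?_, φ, hφ, hlim⟩
  have heq : ∀ᶠ n in atTop, p (φ n) i = q i :=
    (tendsto_pi_nhds.mp hlim i).eventually (isOpen_discrete {q i} |>.mem_nhds rfl)
  obtain ⟨n, hn, hni⟩ := (heq.and (eventually_gt_atTop i)).exists
  exact hn ▸ hp (φ n) i (hni.trans_le (hφ.id_le n))

lemma iInter_closure_image_pi_Iio_subset [MetricSpace X] {f : (ℕ → ℕ) → X}
    (hf : Continuous f) (v : ℕ → ℕ) :
    ⋂ n, closure (f '' (Iio n).pi fun i ↦ Iic (v i)) ⊆ f '' univ.pi fun i ↦ Iic (v i) := by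
  intro z hz
  have hp : ∀ n : ℕ, ∃ p ∈ (Iio n).pi fun i ↦ Iic (v i), dist (f p) z < 1 / (n + 1) := by
    intro n
    obtain ⟨_, ⟨p, hp, rfl⟩, hd⟩ :=
      Metric.mem_closure_iff.mp (mem_iInter.mp hz n) _ Nat.one_div_pos_of_nat
    exact ⟨p, hp, by rwa [dist_comm]⟩
  choose p hp hpz using hp
  have hfp : Tendsto (f ∘ p) atTop (𝓝 z) :=
    tendsto_iff_dist_tendsto_zero.mpr (squeeze_zero (fun _ ↦ dist_nonneg) (fun n ↦ (hpz n).le)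
      tendsto_one_div_add_atTop_nhds_zero_nat)
  obtain ⟨q, hq, φ, hφ, hlim⟩ := exists_tendsto_subseq_of_forall_mem_pi_Iio hp
  exact ⟨q, hq, tendsto_nhds_unique ((hf.tendsto q).comp hlim) (hfp.comp hφ.tendsto_atTop)⟩

lemma exists_isCompact_subset_range_le_measure [TopologicalSpace X]
    [TopologicalSpace.MetrizableSpace X] [MeasurableSpace X] [OpensMeasurableSpace X]
    (μ : Measure X) [IsFiniteMeasure μ] {f : (ℕ → ℕ) → X} (hf : Continuous f) {c : ℝ≥0∞}
    (hc : c < μ (range f)) : ∃ K ⊆ range f, IsCompact K ∧ c ≤ μ K := by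
  let := TopologicalSpace.metrizableSpaceMetric X
  obtain ⟨v, hv⟩ := exists_forall_lt_measure_image_pi_Iio μ f hc
  refine ⟨f '' univ.pi fun i ↦ Iic (v i), image_subset_range _ _,
    (isCompact_univ_pi fun i ↦ (finite_Iic (v i)).isCompact).image hf, ?_⟩
  have hanti : Antitone fun n ↦ closure (f '' (Iio n).pi fun i ↦ Iic (v i)) :=
    fun m n hmn ↦ closure_mono (image_mono (pi_mono' (fun _ _ ↦ le_rfl) (Iio_subset_Iio hmn)))
  calc c ≤ ⨅ n, μ (closure (f '' (Iio n).pi fun i ↦ Iic (v i))) :=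
        le_iInf fun n ↦ (hv n).le.trans (measure_mono subset_closure)
    _ = μ (⋂ n, closure (f '' (Iio n).pi fun i ↦ Iic (v i))) :=
        (hanti.measure_iInter (fun _ ↦ isClosed_closure.measurableSet.nullMeasurableSet)
          ⟨0, measure_ne_top μ _⟩).symm
    _ ≤ μ (f '' univ.pi fun i ↦ Iic (v i)) := measure_mono (iInter_closure_image_pi_Iio_subset hf v)

theorem MeasureTheory.AnalyticSet.nullMeasurableSet [TopologicalSpace X]
    [TopologicalSpace.MetrizableSpace X] [MeasurableSpace X] [OpensMeasurableSpace X]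
    {s : Set X} (hs : AnalyticSet s) (μ : Measure X) [IsFiniteMeasure μ] :
    NullMeasurableSet s μ := by
  rw [AnalyticSet] at hs
  rcases hs with rfl | ⟨f, hf, rfl⟩
  · exact nullMeasurableSet_empty
  refine .of_forall_lt_exists_measurableSet_subset fun c hc ↦ ?_
  obtain ⟨K, hKf, hK, hcK⟩ := exists_isCompact_subset_range_le_measure μ hf hc
  exact ⟨K, hKf, hK.isClosed.measurableSet, hcK⟩

end AnalyticSet

section CompactIntersections

lemma IsCompact.inter_iInter_nonempty_of_forall_fin {Y ι : Type*} [TopologicalSpace Y]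
    {K : Set Y} (hK : IsCompact K) (F : ι → Set Y) (hF : ∀ i, IsClosed (F i))
    (h : ∀ (m : ℕ) (g : Fin m → ι), (K ∩ ⋂ j, F (g j)).Nonempty) : (K ∩ ⋂ i, F i).Nonempty := by
  refine hK.inter_iInter_nonempty F hF fun u ↦ ?_
  convert h u.card fun j ↦ (u.equivFin.symm j : ι) using 2
  rw [u.equivFin.symm.surjective.iInter_comp (fun i : u ↦ F i), iInter_subtype]

variable {Y : Type*} [MetricSpace Y]

lemma IsCompact.inter_iInter_nonempty_iff_thickening {ι : Type*} {K : Set Y} (hK : IsCompact K)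
    {F : ι → Set Y} (hF : ∀ j, IsClosed (F j)) :
    (K ∩ ⋂ j, F j).Nonempty ↔ ∀ δ > 0, (thickening δ K ∩ ⋂ j, thickening δ (F j)).Nonempty := by
  refine ⟨fun h δ hδ ↦ h.mono (inter_subset_inter (self_subset_thickening hδ K)
    (iInter_mono fun j ↦ self_subset_thickening hδ (F j))), fun h ↦ ?_⟩
  have hne : ∀ δ : Ioi (0 : ℝ), (K ∩ ⋂ j, cthickening δ (F j)).Nonempty := by
    rintro ⟨δ, hδ⟩
    obtain ⟨y, hyK, hyF⟩ := h (δ / 2) (half_pos hδ)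
    obtain ⟨a, haK, hya⟩ := mem_thickening_iff.mp hyK
    refine ⟨a, haK, mem_iInter.mpr fun j ↦ ?_⟩
    obtain ⟨b, hbF, hyb⟩ := mem_thickening_iff.mp (mem_iInter.mp hyF j)
    refine mem_cthickening_of_dist_le a b δ (F j) hbF ?_
    linarith [dist_triangle_left a b y]
  obtain ⟨z, hz⟩ := IsCompact.nonempty_iInter_of_directed_nonempty_isCompact_isClosed
    (fun δ : Ioi (0 : ℝ) ↦ K ∩ ⋂ j, cthickening δ (F j))
    (fun δ₁ δ₂ ↦ ⟨⟨min δ₁ δ₂, lt_min δ₁.2 δ₂.2 |> mem_Ioi.mpr⟩,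
      inter_subset_inter_right _ (iInter_mono fun j ↦ cthickening_mono (min_le_left _ _) _),
      inter_subset_inter_right _ (iInter_mono fun j ↦ cthickening_mono (min_le_right _ _) _)⟩)
    hne (fun δ ↦ hK.inter_right (isClosed_iInter fun j ↦ isClosed_cthickening))
    (fun δ ↦ hK.isClosed.inter (isClosed_iInter fun j ↦ isClosed_cthickening))
  simp only [mem_iInter, mem_inter_iff, Subtype.forall, mem_Ioi] at hz
  refine ⟨z, (hz 1 one_pos).1, mem_iInter.mpr fun j ↦ ?_⟩
  rw [← (hF j).closure_eq, closure_eq_iInter_cthickening]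
  exact mem_iInter₂.mpr fun δ hδ ↦ (hz δ hδ).2 j

lemma IsClosed.eq_of_forall_closedBall_inter_nonempty_iff {D : Set Y} (hD : Dense D)
    {F G : Set Y} (hF : IsClosed F) (hG : IsClosed G)
    (h : ∀ d ∈ D, ∀ n : ℕ,
      (closedBall d (1 / (n + 1)) ∩ F).Nonempty ↔ (closedBall d (1 / (n + 1)) ∩ G).Nonempty) :
    F = G := by
  have key : ∀ {F G : Set Y}, IsClosed G → (∀ d ∈ D, ∀ n : ℕ,
      (closedBall d (1 / (n + 1)) ∩ F).Nonempty → (closedBall d (1 / (n + 1)) ∩ G).Nonempty) →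
      F ⊆ G := by
    intro F G hG h z hzF
    by_contra hzG
    obtain ⟨ε, hε, hball⟩ := Metric.isOpen_iff.mp hG.isOpen_compl z hzG
    obtain ⟨n, hn⟩ := exists_nat_one_div_lt (half_pos hε)
    obtain ⟨d, hdD, hzd⟩ := hD.exists_dist_lt z (Nat.one_div_pos_of_nat (n := n))
    obtain ⟨g, hgd, hgG⟩ := h d hdD n ⟨z, mem_closedBall.mpr hzd.le, hzF⟩
    refine hball ?_ hgG
    rw [mem_ball]
    linarith [dist_triangle g d z, mem_closedBall.mp hgd, dist_comm z d]
  exact (key hG fun d hd n ↦ (h d hd n).1).antisymm (key hF fun d hd n ↦ (h d hd n).2)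

lemma measurableSet_setOf_inter_iInter_nonempty [TopologicalSpace.SeparableSpace Y]
    {P ι : Type*} [MeasurableSpace P] [Finite ι] {K : Set Y} (hK : IsCompact K)
    {Φ : ι → P → Set Y} (hcl : ∀ j p, IsClosed (Φ j p))
    (hΦ : ∀ j U, IsOpen U → MeasurableSet {p | (Φ j p ∩ U).Nonempty}) :
    MeasurableSet {p | (K ∩ ⋂ j, Φ j p).Nonempty} := by
  obtain ⟨D, hDc, hD⟩ := TopologicalSpace.exists_countable_dense Y
  have hmem : ∀ (F : Set Y) d δ, d ∈ thickening δ F ↔ (F ∩ ball d δ).Nonempty := fun F d δ ↦ by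
    simp only [mem_thickening_iff, Set.Nonempty, mem_inter_iff, mem_ball, dist_comm d]
  -- the thickened condition is open in the point, so it can be tested on the countable set `D`
  have heq : {p | (K ∩ ⋂ j, Φ j p).Nonempty} = ⋂ n : ℕ, ⋃ d ∈ D,
      {p | d ∈ thickening (1 / (n + 1)) K} ∩
        ⋂ j, {p | (Φ j p ∩ ball d (1 / (n + 1))).Nonempty} := by
    ext p
    simp only [mem_ofPred_eq, mem_iInter, mem_iUnion, mem_inter_iff, exists_prop, ← hmem,
      hK.inter_iInter_nonempty_iff_thickening (hcl · p)]
    constructor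
    · intro h n
      obtain ⟨d, hd, hdD⟩ := hD.inter_open_nonempty _
        (isOpen_thickening.inter (isOpen_iInter_of_finite fun j ↦ isOpen_thickening))
        (h _ Nat.one_div_pos_of_nat)
      exact ⟨d, hdD, hd.1, mem_iInter.mp hd.2⟩
    · intro h δ hδ
      obtain ⟨n, hn⟩ := exists_nat_one_div_lt hδ
      obtain ⟨d, -, hdK, hdΦ⟩ := h n
      exact ⟨d, thickening_mono hn.le _ hdK,
        mem_iInter.mpr fun j ↦ thickening_mono hn.le _ (hdΦ j)⟩
  rw [heq]
  exact .iInter fun n ↦ .biUnion hDc fun d _ ↦ (MeasurableSet.const _).inter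
    (.iInter fun j ↦ hΦ j _ isOpen_ball)

end CompactIntersections

section TailIntersection

variable {α β : Type*}

def tailInter (σ : (ℕ → α) → Set β) (x : ℕ → α) : Set β :=
  ⋂ y ∈ {y : ℕ → α | y =ᶠ[atTop] x}, σ y

lemma tailInter_congr (σ : (ℕ → α) → Set β) {x x' : ℕ → α} (h : x =ᶠ[atTop] x') :
    tailInter σ x = tailInter σ x' := by
  have : {y : ℕ → α | y =ᶠ[atTop] x} = {y | y =ᶠ[atTop] x'} :=
    ext fun y ↦ ⟨fun hy ↦ hy.trans h, fun hy ↦ hy.trans h.symm⟩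
  simp only [tailInter, this]

lemma isClosed_tailInter [TopologicalSpace β] {σ : (ℕ → α) → Set β} (hcl : ∀ x, IsClosed (σ x))
    (x : ℕ → α) :
    IsClosed (tailInter σ x) :=
  isClosed_biInter fun y _ ↦ hcl y

lemma inter_tailInter_nonempty_iff [TopologicalSpace β] {σ : (ℕ → α) → Set β}
    (hcl : ∀ x, IsClosed (σ x)) {K : Set β} (hK : IsCompact K) (x : ℕ → α) :
    (K ∩ tailInter σ x).Nonempty ↔
      ∀ (m N : ℕ) (w : Fin m → ℕ → α), (K ∩ ⋂ j, σ ((Iio N).piecewise (w j) x)).Nonempty := by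
  classical
  constructor
  · rintro ⟨z, hzK, hz⟩ m N w
    refine ⟨z, hzK, mem_iInter.mpr fun j ↦ mem_iInter₂.mp hz _ ?_⟩
    exact (eventually_ge_atTop N).mono fun n hn ↦ piecewise_eq_of_notMem _ _ _ (not_lt.mpr hn)
  · intro h
    rw [tailInter, biInter_eq_iInter]
    refine hK.inter_iInter_nonempty_of_forall_fin _ (fun y ↦ hcl y) fun m g ↦ ?_
    obtain ⟨N, hN⟩ := eventually_atTop.mp (eventually_all.mpr fun j ↦ (g j).2)
    convert h m N fun j ↦ (g j).1 using 5 with j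
    funext n
    by_cases hn : n < N
    · rw [piecewise_eq_of_mem _ _ _ (mem_Iio.mpr hn)]
    · rw [piecewise_eq_of_notMem _ _ _ (notMem_Iio.mpr (not_lt.mp hn))]
      exact hN n (not_lt.mp hn) j

end TailIntersection

section TailIntersectionMeasurability

variable {α β : Type*} [TopologicalSpace α] [PolishSpace α] [MeasurableSpace α] [BorelSpace α]
  [MetricSpace β] [TopologicalSpace.SeparableSpace β]

lemma nullMeasurableSet_setOf_inter_tailInter_nonempty {σ : (ℕ → α) → Set β}
    (hcl : ∀ x, IsClosed (σ x)) (hσ : ∀ U, IsOpen U → MeasurableSet {x | (σ x ∩ U).Nonempty})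
    {K : Set β} (hK : IsCompact K) (μ : Measure (ℕ → α)) [IsFiniteMeasure μ] :
    NullMeasurableSet {x | (K ∩ tailInter σ x).Nonempty} μ := by
  have hmeas : ∀ m N, MeasurableSet {p : (Fin m → ℕ → α) × (ℕ → α) |
      (K ∩ ⋂ j, σ ((Iio N).piecewise (p.1 j) p.2)).Nonempty} := fun m N ↦
    measurableSet_setOf_inter_iInter_nonempty hK (fun _ _ ↦ hcl _) fun j U hU ↦
      (hσ U hU).preimage ((measurable_piecewise_Iio N).comp
        (f := fun p : (Fin m → ℕ → α) × (ℕ → α) ↦ (p.1 j, p.2)) (by fun_prop))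
  have hcompl : {x | (K ∩ tailInter σ x).Nonempty}ᶜ = ⋃ (m : ℕ) (N : ℕ), Prod.snd ''
      {p : (Fin m → ℕ → α) × (ℕ → α) | (K ∩ ⋂ j, σ ((Iio N).piecewise (p.1 j) p.2)).Nonempty}ᶜ := by
    ext x
    simp [inter_tailInter_nonempty_iff hcl hK]
  rw [← compl_compl {x | (K ∩ tailInter σ x).Nonempty}, hcompl]
  refine (AnalyticSet.nullMeasurableSet ?_ μ).compl
  exact .iUnion fun m ↦ .iUnion fun N ↦
    (hmeas m N).compl.analyticSet.image_of_continuous continuous_snd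

end TailIntersectionMeasurability

theorem stmt_17_general (μs : ℕ → Measure ℂ) (hμs : ∀ n, IsProbabilityMeasure (μs n))
    (μ : Measure (ℕ → ℂ))
    (hprod : ∀ s : Finset ℕ, ∀ A : ℕ → Set ℂ, (∀ n ∈ s, MeasurableSet (A n)) →
      μ {x | ∀ n ∈ s, x n ∈ A n} = ∏ n ∈ s, μs n (A n))
    (σ : (ℕ → ℂ) → Set ℂ)
    (hσcl : ∀ x, IsClosed (σ x))
    (hσ : ∀ U : Set ℂ, IsOpen U → MeasurableSet {x : ℕ → ℂ | (σ x ∩ U).Nonempty}) :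
    ∃ A : Set ℂ, IsClosed A ∧
      NullMeasurableSet
        {x : ℕ → ℂ | (⋂ y ∈ {y : ℕ → ℂ | ∃ N, ∀ n ≥ N, y n = x n}, σ y) = A} μ ∧
      μ {x : ℕ → ℂ | (⋂ y ∈ {y : ℕ → ℂ | ∃ N, ∀ n ≥ N, y n = x n}, σ y) = A} = 1 := by
  obtain rfl : μ = Measure.infinitePi μs :=
    Measure.eq_infinitePi μs fun s t ht ↦ hprod s t fun n _ ↦ ht n
  let d := TopologicalSpace.denseSeq ℂ
  have hdich : ∀ i : ℕ × ℕ, ∃ b : Prop, ∀ᵐ x ∂Measure.infinitePi μs,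
      ((closedBall (d i.1) (1 / (i.2 + 1)) ∩ tailInter σ x).Nonempty ↔ b) := fun i ↦
    (ae_mem_or_ae_notMem_of_invariant
      (nullMeasurableSet_setOf_inter_tailInter_nonempty hσcl hσ (isCompact_closedBall _ _) _)
      fun x y hxy hx ↦ by rwa [mem_ofPred_eq, ← tailInter_congr σ hxy]).elim
    (fun h ↦ ⟨True, h.mono fun _ hx ↦ iff_true_intro hx⟩)
    (fun h ↦ ⟨False, h.mono fun _ hx ↦ iff_false_intro hx⟩)
  choose b hb using hdich
  obtain ⟨x₀, hx₀⟩ := (ae_all_iff.mpr hb).exists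
  have hae : ∀ᵐ x ∂Measure.infinitePi μs, tailInter σ x = tailInter σ x₀ :=
    (ae_all_iff.mpr hb).mono fun x hx ↦
      (isClosed_tailInter hσcl x).eq_of_forall_closedBall_inter_nonempty_iff
        (TopologicalSpace.denseRange_denseSeq ℂ) (isClosed_tailInter hσcl x₀)
        (by rintro _ ⟨k, rfl⟩ n; exact (hx (k, n)).trans (hx₀ (k, n)).symm)
  have hfull : {x | tailInter σ x = tailInter σ x₀} =ᵐ[Measure.infinitePi μs] univ :=
    ae_eq_univ.mpr (ae_iff.mp hae)
  simp only [← eventually_atTop]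
  exact ⟨tailInter σ x₀, isClosed_tailInter hσcl x₀, nullMeasurableSet_univ.congr hfull.symm,
    (measure_congr hfull).trans measure_univ⟩

/-- For the product measure `μ = ⊗ₙ μₙ` of Borel probability measures on `ℂ`, the tail
part `σ_∼` of a closed-valued open-measurable multifunction is almost surely equal to a
fixed closed set `A`. -/
theorem stmt_17 (μs : ℕ → Measure ℂ) (hμs : ∀ n, IsProbabilityMeasure (μs n))
    (μ : Measure (ℕ → ℂ)) (hμ : IsProbabilityMeasure μ)
    (hprod : ∀ s : Finset ℕ, ∀ A : ℕ → Set ℂ, (∀ n ∈ s, MeasurableSet (A n)) →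
      μ {x | ∀ n ∈ s, x n ∈ A n} = ∏ n ∈ s, μs n (A n))
    (σ : (ℕ → ℂ) → Set ℂ)
    (hσcl : ∀ x, IsClosed (σ x))
    (hσ : ∀ U : Set ℂ, IsOpen U → MeasurableSet {x : ℕ → ℂ | (σ x ∩ U).Nonempty}) :
    ∃ A : Set ℂ, IsClosed A ∧
      NullMeasurableSet
        {x : ℕ → ℂ | (⋂ y ∈ {y : ℕ → ℂ | ∃ N, ∀ n ≥ N, y n = x n}, σ y) = A} μ ∧
      μ {x : ℕ → ℂ | (⋂ y ∈ {y : ℕ → ℂ | ∃ N, ∀ n ≥ N, y n = x n}, σ y) = A} = 1 :=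
  stmt_17_general μs hμs μ hprod σ hσcl hσ
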